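/- Let q = 3^m with m a positive integer and let U_{q+1} be the group of (q+1)-th roots of unity in F_{q^2}. If x, y ∈ U_{q+1}\{1} are distinct, then the element z := -(x + y + xy)/(x + y + 1) lies in U_{q+1} and is distinct from x, y, and 1. -/

import Mathlib

/-!
In characteristic `p` with `q = p ^ n`, the Frobenius power `u ↦ u ^ q` is a ring endomorphism
inverting every `u` with `u ^ (q + 1) = 1`. For `a = x + y + xy` and `b = x + y + 1` it therefore
exchanges `a` and `b` up to the factor `xy`: `a ^ q * xy = b` and `b ^ q * xy = a`, whence
`a ^ (q + 1) = b ^ (q + 1)` and `z = -a / b` lies in `U_{q+1}` once `b ≠ 0`. In characteristic 3,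
`b = 0` would force `a = 0`, hence `xy = 1` and `0 = x * b = x ^ 2 + x + 1 = (x - 1) ^ 2`.
The three inequalities come from the factorisations `a + x b = (x - 1)(x - y)` and
`a + b = (x - 1)(y - 1)`, valid in characteristic 3.
-/

section Frobenius

variable {K : Type*} [Field K] (p : ℕ) [ExpChar K p] {n : ℕ} {x y : K}

lemma ne_zero_of_pow_succ_eq_one (hx : x ^ (n + 1) = 1) : x ≠ 0 := by
  rintro rfl
  simp at hx

lemma pow_eq_inv_of_pow_succ_eq_one (hx : x ^ (n + 1) = 1) : x ^ n = x⁻¹ :=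
  eq_inv_of_mul_eq_one_left (by rwa [← pow_succ])

lemma add_add_mul_pow_mul_eq (hx : x ^ (p ^ n + 1) = 1) (hy : y ^ (p ^ n + 1) = 1) :
    (x + y + x * y) ^ p ^ n * (x * y) = x + y + 1 := by
  have hx0 := ne_zero_of_pow_succ_eq_one hx
  have hy0 := ne_zero_of_pow_succ_eq_one hy
  rw [add_pow_expChar_pow, add_pow_expChar_pow, mul_pow, pow_eq_inv_of_pow_succ_eq_one hx,
    pow_eq_inv_of_pow_succ_eq_one hy]
  field_simp
  ring

lemma add_add_one_pow_mul_eq (hx : x ^ (p ^ n + 1) = 1) (hy : y ^ (p ^ n + 1) = 1) :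
    (x + y + 1) ^ p ^ n * (x * y) = x + y + x * y := by
  have hx0 := ne_zero_of_pow_succ_eq_one hx
  have hy0 := ne_zero_of_pow_succ_eq_one hy
  rw [add_pow_expChar_pow, add_pow_expChar_pow, one_pow, pow_eq_inv_of_pow_succ_eq_one hx,
    pow_eq_inv_of_pow_succ_eq_one hy]
  field_simp
  ring

lemma add_add_mul_pow_succ_eq (hx : x ^ (p ^ n + 1) = 1) (hy : y ^ (p ^ n + 1) = 1) :
    (x + y + x * y) ^ (p ^ n + 1) = (x + y + 1) ^ (p ^ n + 1) := by
  have hxy0 := mul_ne_zero (ne_zero_of_pow_succ_eq_one hx) (ne_zero_of_pow_succ_eq_one hy)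
  apply mul_right_cancel₀ hxy0
  linear_combination (x + y + x * y) * add_add_mul_pow_mul_eq p hx hy -
    (x + y + 1) * add_add_one_pow_mul_eq p hx hy

end Frobenius

section CharThree

variable {K : Type*} [Field K] [CharP K 3] {n : ℕ} {x y : K}

lemma add_add_one_ne_zero (hx : x ^ (3 ^ n + 1) = 1) (hy : y ^ (3 ^ n + 1) = 1) (hx1 : x ≠ 1) :
    x + y + 1 ≠ 0 := by
  intro hb
  have h3 : (3 : K) = 0 := CharP.cast_eq_zero K 3
  have ha : x + y + x * y = 0 := by
    rw [← add_add_one_pow_mul_eq 3 hx hy, hb, zero_pow (by positivity), zero_mul]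
  have hsq : (x - 1) ^ 2 = 0 := by
    linear_combination (x + 1) * hb - ha - x * h3
  exact hx1 (sub_eq_zero.mp (pow_eq_zero_iff two_ne_zero |>.mp hsq))

lemma neg_add_add_mul_div_pow_succ_eq_one (hx : x ^ (3 ^ n + 1) = 1) (hy : y ^ (3 ^ n + 1) = 1)
    (hb : x + y + 1 ≠ 0) : (-(x + y + x * y) / (x + y + 1)) ^ (3 ^ n + 1) = 1 := by
  have heven : Even (3 ^ n + 1) := (Odd.pow (by decide : Odd 3)).add_one
  rw [neg_div, heven.neg_pow, div_pow, add_add_mul_pow_succ_eq 3 hx hy,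
    div_self (pow_ne_zero _ hb)]

lemma neg_add_add_mul_div_ne_left (hb : x + y + 1 ≠ 0) (hx1 : x ≠ 1) (hxy : x ≠ y) :
    -(x + y + x * y) / (x + y + 1) ≠ x := by
  have h3 : (3 : K) = 0 := CharP.cast_eq_zero K 3
  rw [Ne, div_eq_iff hb]
  intro h
  exact mul_ne_zero (sub_ne_zero.mpr hx1) (sub_ne_zero.mpr hxy)
    (by linear_combination -h - (x * y + x) * h3)

lemma neg_add_add_mul_div_ne_right (hb : x + y + 1 ≠ 0) (hy1 : y ≠ 1) (hxy : x ≠ y) :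
    -(x + y + x * y) / (x + y + 1) ≠ y := by
  have := neg_add_add_mul_div_ne_left (x := y) (y := x) (by rwa [add_comm y x]) hy1 hxy.symm
  rwa [add_comm y x, mul_comm y x] at this

lemma neg_add_add_mul_div_ne_one (hb : x + y + 1 ≠ 0) (hx1 : x ≠ 1) (hy1 : y ≠ 1) :
    -(x + y + x * y) / (x + y + 1) ≠ 1 := by
  have h3 : (3 : K) = 0 := CharP.cast_eq_zero K 3
  rw [Ne, div_eq_iff hb, one_mul]
  intro h
  exact mul_ne_zero (sub_ne_zero.mpr hx1) (sub_ne_zero.mpr hy1)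
    (by linear_combination -h - (x + y) * h3)

end CharThree

theorem stmt10_general {E : Type*} [Field E] [Fintype E] (m : ℕ)
    (hE : Fintype.card E = (3 ^ m) ^ 2)
    (x y : E) (hx : x ^ (3 ^ m + 1) = 1) (hy : y ^ (3 ^ m + 1) = 1)
    (hx1 : x ≠ 1) (hy1 : y ≠ 1) (hxy : x ≠ y) :
    (-(x + y + x * y) / (x + y + 1)) ^ (3 ^ m + 1) = 1 ∧
    -(x + y + x * y) / (x + y + 1) ≠ x ∧
    -(x + y + x * y) / (x + y + 1) ≠ y ∧
    -(x + y + x * y) / (x + y + 1) ≠ 1 := by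
  have : CharP E 3 := charP_of_card_eq_prime_pow (f := m * 2) (by rw [hE, pow_mul])
  have hb := add_add_one_ne_zero hx hy hx1
  exact ⟨neg_add_add_mul_div_pow_succ_eq_one hx hy hb, neg_add_add_mul_div_ne_left hb hx1 hxy,
    neg_add_add_mul_div_ne_right hb hy1 hxy, neg_add_add_mul_div_ne_one hb hx1 hy1⟩

/-- for distinct `x, y ∈ U_{q+1} \ {1}`, the element
`z = -(x+y+xy)/(x+y+1)` lies in `U_{q+1}` and differs from `x`, `y` and `1`. -/
theorem stmt10 {E : Type*} [Field E] [Fintype E] (m : ℕ) (hm : 0 < m)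
    (hE : Fintype.card E = (3 ^ m) ^ 2)
    (x y : E) (hx : x ^ (3 ^ m + 1) = 1) (hy : y ^ (3 ^ m + 1) = 1)
    (hx1 : x ≠ 1) (hy1 : y ≠ 1) (hxy : x ≠ y) :
    (-(x + y + x * y) / (x + y + 1)) ^ (3 ^ m + 1) = 1 ∧
    -(x + y + x * y) / (x + y + 1) ≠ x ∧
    -(x + y + x * y) / (x + y + 1) ≠ y ∧
    -(x + y + x * y) / (x + y + 1) ≠ 1 :=
  stmt10_general m hE x y hx hy hx1 hy1 hxy
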